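/- There exists a unique ρ ∈ (0,1) such that ∑_{k=1}^{∞} arcsin(ρ^k) = π, and this ρ satisfies 0.749 < ρ < 0.75. Consequently, any progressive shrinking strategy with probe radii ρ₁^k covering the circle's perimeter requires ρ₁ ≥ 0.749, giving a lower bound coefficient -1/log₂(ρ₁) > 2.4. -/

import Mathlib

/-!
`f ρ = ∑ₖ arcsin (ρ ^ (k + 1))` is strictly increasing on `[0, 1)` (termwise, strictly in the
first term) and continuous on every `[0, r]` with `r < 1`, because `arcsin x ≤ π / 2 * x`
dominates its terms by a geometric series. Hence `f = π` has at most one root, and it has one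
between `0.74915365` and `3 / 4` since `f 0.74915365 < π < f (3 / 4)`. Each of these numerical
inequalities splits `f` into a few leading terms, bounded through the alternating Taylor partial
sums of `sin`, and a tail compared with geometric series. Monotonicity gives `ρ₁ > 0.74915365`
whenever `f ρ₁ ≥ π`, and `0.74915365 ^ 12 > 2⁻⁵` turns this into `log₂ ρ₁ > -5 / 12`, that is
`-1 / log₂ ρ₁ > 12 / 5`.
-/

open Real Finset
open scoped Nat

namespace Real

lemma antitone_sin_taylor_term {x : ℝ} (hx0 : 0 ≤ x) (hx : x ^ 2 ≤ 6) :
    Antitone fun n : ℕ => x ^ (2 * n + 1) / (2 * n + 1)! := by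
  refine antitone_nat_of_succ_le fun n => ?_
  have hfact : ((2 * (n + 1) + 1)! : ℝ) = (2 * n + 1)! * ((2 * n + 2) * (2 * n + 3)) := by
    rw [show 2 * (n + 1) + 1 = 2 * n + 1 + 1 + 1 by ring, Nat.factorial_succ, Nat.factorial_succ]
    push_cast
    ring
  have hx2 : x ^ 2 ≤ (2 * n + 2) * (2 * n + 3) := by nlinarith
  rw [hfact, show 2 * (n + 1) + 1 = 2 * n + 1 + 2 by ring, pow_add, mul_div_mul_comm]
  exact mul_le_of_le_one_right (by positivity) ((div_le_one (by positivity)).2 hx2)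

lemma tendsto_sin_taylor (x : ℝ) :
    Filter.Tendsto (fun n => ∑ i ∈ range n, (-1) ^ i * (x ^ (2 * i + 1) / (2 * i + 1)!))
      Filter.atTop (nhds (sin x)) := by
  simpa only [mul_div_assoc] using (hasSum_sin x).tendsto_sum_nat

lemma arcsin_le_of_le_sin_taylor {x a : ℝ} (ha0 : 0 ≤ a) (ha : a < π / 2) (k : ℕ)
    (h : x ≤ ∑ i ∈ range (2 * k), (-1) ^ i * (a ^ (2 * i + 1) / (2 * i + 1)!)) :
    arcsin x ≤ a := by
  have ha6 : a ^ 2 ≤ 6 := by nlinarith [pi_lt_four]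
  refine (arcsin_le_iff_le_sin' ⟨by linarith [pi_pos], ha⟩).2 (h.trans ?_)
  exact (antitone_sin_taylor_term ha0 ha6).alternating_series_le_tendsto
    (tendsto_sin_taylor a) k

lemma le_arcsin_of_sin_taylor_le {x a : ℝ} (ha0 : 0 ≤ a) (ha : a ≤ π / 2) (k : ℕ)
    (h : ∑ i ∈ range (2 * k + 1), (-1) ^ i * (a ^ (2 * i + 1) / (2 * i + 1)!) ≤ x) :
    a ≤ arcsin x := by
  have ha6 : a ^ 2 ≤ 6 := by nlinarith [pi_lt_four]
  refine (le_arcsin_iff_sin_le' ⟨by linarith [pi_pos], ha⟩).2 (le_trans ?_ h)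
  exact (antitone_sin_taylor_term ha0 ha6).tendsto_le_alternating_series
    (tendsto_sin_taylor a) k

lemma arcsin_le_pi_div_two_mul {x : ℝ} (hx0 : 0 ≤ x) (hx1 : x ≤ 1) : arcsin x ≤ π / 2 * x :=
  (arcsin_le_iff_le_sin ⟨by linarith, hx1⟩
    ⟨by nlinarith [pi_pos], by nlinarith [pi_pos]⟩).2 (le_sin_mul hx0 hx1)

lemma self_le_arcsin {x : ℝ} (hx0 : 0 ≤ x) (hx1 : x ≤ 1) : x ≤ arcsin x :=
  (le_arcsin_iff_sin_le ⟨by linarith [pi_gt_three], by linarith [pi_gt_three]⟩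
    ⟨by linarith, hx1⟩).2 (sin_le hx0)

lemma arcsin_le_add_cube_add_fifth {x : ℝ} (hx0 : 0 ≤ x) (hx : x ≤ 1 / 2) :
    arcsin x ≤ x + x ^ 3 / 6 + x ^ 5 / 5 := by
  have hcube : ∀ t : ℝ, 0 ≤ t → t ≤ 1 / 4 → (1 + t / 6 + t ^ 2 / 5) ^ 3 ≤ 1 + 6 / 5 * t := by
    intro t ht0 ht
    have hu : t / 6 + t ^ 2 / 5 ≤ 13 / 60 * t := by nlinarith
    have hu0 : 0 ≤ t / 6 + t ^ 2 / 5 := by positivity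
    nlinarith [mul_nonneg hu0 hu0, mul_nonneg (mul_nonneg hu0 hu0) hu0]
  have hx_le : x ≤ (x + x ^ 3 / 6 + x ^ 5 / 5) - (x + x ^ 3 / 6 + x ^ 5 / 5) ^ 3 / 6 := by
    have := hcube (x ^ 2) (sq_nonneg x) (by nlinarith)
    rw [show x + x ^ 3 / 6 + x ^ 5 / 5 = x * (1 + x ^ 2 / 6 + (x ^ 2) ^ 2 / 5) by ring,
      mul_pow]
    nlinarith [pow_nonneg hx0 3]
  have ha : x + x ^ 3 / 6 + x ^ 5 / 5 < π / 2 := by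
    nlinarith [pi_gt_three, pow_le_pow_left₀ hx0 hx 3, pow_le_pow_left₀ hx0 hx 5]
  have ha0 : -(π / 2) ≤ x + x ^ 3 / 6 + x ^ 5 / 5 := by
    nlinarith [pi_pos, pow_nonneg hx0 3, pow_nonneg hx0 5]
  exact (arcsin_le_iff_le_sin' ⟨ha0, ha⟩).2
    (hx_le.trans (sin_ge_sub_cube (by positivity)))

lemma div_lt_neg_one_div_logb {b ρ : ℝ} {p q : ℕ} (hb : 1 < b) (hρ0 : 0 < ρ) (hρ1 : ρ < 1)
    (hp : 0 < p) (h : b⁻¹ ^ p < ρ ^ q) : (q : ℝ) / p < -1 / logb b ρ := by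
  have hL : logb b ρ < 0 := logb_neg hb hρ0 hρ1
  have hlog : -(p : ℝ) < q * logb b ρ := by
    have := logb_lt_logb hb (by positivity) h
    rwa [logb_pow, logb_pow, logb_inv, logb_self_eq_one hb, mul_neg_one] at this
  rw [neg_div, ← div_neg, div_lt_div_iff₀ (by positivity) (by linarith)]
  linarith

end Real

section GeometricArcsinSeries

variable {x c : ℝ}

lemma summable_arcsin_mul_pow (hx0 : 0 ≤ x) (hx1 : x ≤ 1) (hc0 : 0 ≤ c) (hc1 : c < 1) :
    Summable fun k : ℕ => arcsin (x * c ^ k) := by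
  refine .of_nonneg_of_le (fun k => arcsin_nonneg.2 (by positivity)) (fun k => ?_)
    ((summable_geometric_of_lt_one hc0 hc1).mul_left (π / 2 * x))
  rw [mul_assoc]
  exact arcsin_le_pi_div_two_mul (by positivity)
    (mul_le_one₀ hx1 (by positivity) (pow_le_one₀ hc0 hc1.le))

lemma div_one_sub_le_tsum_arcsin_mul_pow (hx0 : 0 ≤ x) (hx1 : x ≤ 1) (hc0 : 0 ≤ c)
    (hc1 : c < 1) : x / (1 - c) ≤ ∑' k : ℕ, arcsin (x * c ^ k) := by
  refine hasSum_le (fun k => self_le_arcsin (by positivity) ?_)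
    ((hasSum_geometric_of_lt_one hc0 hc1).mul_left x)
    (summable_arcsin_mul_pow hx0 hx1 hc0 hc1).hasSum
  exact mul_le_one₀ hx1 (by positivity) (pow_le_one₀ hc0 hc1.le)

lemma tsum_arcsin_mul_pow_le (hx0 : 0 ≤ x) (hx : x ≤ 1 / 2) (hc0 : 0 ≤ c) (hc1 : c < 1) :
    ∑' k : ℕ, arcsin (x * c ^ k) ≤
      x / (1 - c) + x ^ 3 / 6 / (1 - c ^ 3) + x ^ 5 / 5 / (1 - c ^ 5) := by
  have hgeom (n : ℕ) (hn : n ≠ 0) : HasSum (fun k : ℕ => (c ^ n) ^ k) (1 - c ^ n)⁻¹ :=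
    hasSum_geometric_of_lt_one (by positivity) (pow_lt_one₀ hc0 hc1 hn)
  have hbound := (((hgeom 1 one_ne_zero).mul_left x).add
    ((hgeom 3 (by norm_num)).mul_left (x ^ 3 / 6))).add
    ((hgeom 5 (by norm_num)).mul_left (x ^ 5 / 5))
  calc ∑' k : ℕ, arcsin (x * c ^ k)
      ≤ x * (1 - c ^ 1)⁻¹ + x ^ 3 / 6 * (1 - c ^ 3)⁻¹ + x ^ 5 / 5 * (1 - c ^ 5)⁻¹ := by
        refine hasSum_le (fun k => ?_)
          (summable_arcsin_mul_pow hx0 (by linarith) hc0 hc1).hasSum hbound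
        have hxk : x * c ^ k ≤ 1 / 2 :=
          (mul_le_of_le_one_right hx0 (pow_le_one₀ hc0 hc1.le)).trans hx
        refine (arcsin_le_add_cube_add_fifth (by positivity) hxk).trans_eq ?_
        ring
    _ = x / (1 - c) + x ^ 3 / 6 / (1 - c ^ 3) + x ^ 5 / 5 / (1 - c ^ 5) := by ring

end GeometricArcsinSeries

noncomputable def arcsinPowSum (ρ : ℝ) : ℝ := ∑' k : ℕ, arcsin (ρ ^ (k + 1))

section ArcsinPowSum

variable {ρ : ℝ}

lemma summable_arcsin_pow (hρ0 : 0 ≤ ρ) (hρ1 : ρ < 1) :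
    Summable fun k : ℕ => arcsin (ρ ^ (k + 1)) :=
  (summable_arcsin_mul_pow hρ0 hρ1.le hρ0 hρ1).congr fun k => by rw [pow_succ']

lemma arcsinPowSum_eq_sum_add_tsum (hρ0 : 0 ≤ ρ) (hρ1 : ρ < 1) (n : ℕ) :
    arcsinPowSum ρ =
      ∑ i ∈ range n, arcsin (ρ ^ (i + 1)) + ∑' i : ℕ, arcsin (ρ ^ (n + 1) * ρ ^ i) := by
  rw [arcsinPowSum, ← (summable_arcsin_pow hρ0 hρ1).sum_add_tsum_nat_add n]
  congr 2 with i
  rw [← pow_add]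
  congr 2
  omega

lemma strictMonoOn_arcsinPowSum : StrictMonoOn arcsinPowSum (Set.Ico 0 1) := by
  intro a ⟨ha0, ha1⟩ b ⟨hb0, hb1⟩ hab
  refine Summable.tsum_lt_tsum (i := 0)
    (fun k => arcsin_le_arcsin (pow_le_pow_left₀ ha0 hab.le _)) ?_
    (summable_arcsin_pow ha0 ha1) (summable_arcsin_pow hb0 hb1)
  simpa using arcsin_lt_arcsin (by linarith) hab hb1.le

lemma continuousOn_arcsinPowSum {r : ℝ} (hr0 : 0 ≤ r) (hr1 : r < 1) :
    ContinuousOn arcsinPowSum (Set.Icc 0 r) := by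
  refine continuousOn_tsum (u := fun k => π / 2 * r ^ (k + 1))
    (fun k => (continuous_arcsin.comp (continuous_pow _)).continuousOn) ?_
    fun k y ⟨hy0, hyr⟩ => ?_
  · exact ((summable_geometric_of_lt_one hr0 hr1).mul_left (π / 2 * r)).congr fun k => by ring
  · have hyk : y ^ (k + 1) ≤ r ^ (k + 1) := pow_le_pow_left₀ hy0 hyr _
    rw [Real.norm_of_nonneg (arcsin_nonneg.2 (by positivity))]
    calc arcsin (y ^ (k + 1)) ≤ π / 2 * y ^ (k + 1) :=
          arcsin_le_pi_div_two_mul (by positivity) (hyk.trans (pow_le_one₀ hr0 hr1.le))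
      _ ≤ π / 2 * r ^ (k + 1) := by gcongr

end ArcsinPowSum

/- `0.74915365` lies between `2 ^ (-5 / 12) ≈ 0.7491535` and the root `≈ 0.7491547`. The margin
`π - arcsinPowSum 0.74915365 ≈ 2 · 10⁻⁵` is why seven terms are evaluated one by one and the tail
needs the quintic bound on `arcsin`. -/
lemma arcsinPowSum_lt_pi : arcsinPowSum 0.74915365 < π := by
  have hc0 : (0 : ℝ) ≤ 0.74915365 := by norm_num
  have hc1 : (0.74915365 : ℝ) < 1 := by norm_num
  have hhead : ∑ i ∈ range 7, arcsin ((0.74915365 : ℝ) ^ (i + 1)) ≤ ∑ i : Fin 7,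
      ![0.84678437, 0.595872641, 0.433939465, 0.320436056, 0.238215354, 0.177710762,
        0.132823226] i := by
    rw [Finset.sum_range]
    gcongr with i
    fin_cases i <;> apply arcsin_le_of_le_sin_taylor _ _ 2 <;>
      norm_num [sum_range_succ, Nat.factorial] <;> linarith [pi_gt_three]
  have htail := tsum_arcsin_mul_pow_le (x := 0.74915365 ^ (7 + 1)) (by positivity)
    (by norm_num) hc0 hc1
  rw [arcsinPowSum_eq_sum_add_tsum hc0 hc1 7]
  refine (add_le_add hhead htail).trans_lt ?_
  norm_num [Fin.sum_univ_succ]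
  linarith [pi_gt_d6]

lemma pi_lt_arcsinPowSum : π < arcsinPowSum (3 / 4) := by
  have hc0 : (0 : ℝ) ≤ 3 / 4 := by norm_num
  have hc1 : (3 / 4 : ℝ) < 1 := by norm_num
  have hhead : ∑ i : Fin 4, ![0.848, 0.597, 0.435, 0.321] i ≤
      ∑ i ∈ range 4, arcsin ((3 / 4 : ℝ) ^ (i + 1)) := by
    rw [Finset.sum_range]
    gcongr with i
    fin_cases i <;> apply le_arcsin_of_sin_taylor_le _ _ 2 <;>
      norm_num [sum_range_succ, Nat.factorial] <;> linarith [pi_gt_three]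
  have htail := div_one_sub_le_tsum_arcsin_mul_pow (x := (3 / 4) ^ (4 + 1)) (by positivity)
    (by norm_num) hc0 hc1
  rw [arcsinPowSum_eq_sum_add_tsum hc0 hc1 4]
  refine lt_of_lt_of_le ?_ (add_le_add hhead htail)
  norm_num [Fin.sum_univ_succ]
  linarith [pi_lt_d6]

lemma exists_arcsinPowSum_eq_pi :
    ∃ ρ ∈ Set.Icc (0.74915365 : ℝ) (3 / 4), arcsinPowSum ρ = π :=
  intermediate_value_Icc (by norm_num)
    ((continuousOn_arcsinPowSum (by norm_num) (by norm_num)).mono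
      (Set.Icc_subset_Icc_left (by norm_num)))
    ⟨arcsinPowSum_lt_pi.le, pi_lt_arcsinPowSum.le⟩

lemma lt_of_pi_le_arcsinPowSum {ρ : ℝ} (hρ : ρ ∈ Set.Ico 0 1) (hπ : π ≤ arcsinPowSum ρ) :
    0.74915365 < ρ :=
  (strictMonoOn_arcsinPowSum.lt_iff_lt (by norm_num) hρ).1 (arcsinPowSum_lt_pi.trans_le hπ)

/-- There is a unique `ρ ∈ (0,1)` with `∑_{k≥1} arcsin (ρ^k) = π`; it lies in
`(0.749, 0.75)`. Consequently, any `ρ₁ ∈ (0,1)` whose shrinking probes can cover the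
perimeter (i.e. `∑_{k≥1} arcsin (ρ₁^k) ≥ π`) satisfies `ρ₁ ≥ 0.749`, and the
coefficient `-1 / log₂ ρ₁` exceeds `2.4`. -/
theorem perimeter_covering_threshold :
    (∃ ρ : ℝ, (ρ ∈ Set.Ioo (0 : ℝ) 1 ∧ (∑' k : ℕ, Real.arcsin (ρ ^ (k + 1))) = Real.pi) ∧
      (∀ ρ' : ℝ, ρ' ∈ Set.Ioo (0 : ℝ) 1 →
        (∑' k : ℕ, Real.arcsin (ρ' ^ (k + 1))) = Real.pi → ρ' = ρ) ∧
      0.749 < ρ ∧ ρ < 0.75) ∧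
    (∀ ρ₁ : ℝ, ρ₁ ∈ Set.Ioo (0 : ℝ) 1 →
      Real.pi ≤ (∑' k : ℕ, Real.arcsin (ρ₁ ^ (k + 1))) →
      (0.749 : ℝ) ≤ ρ₁ ∧ (2.4 : ℝ) < -1 / Real.logb 2 ρ₁) := by
  have hIoo : Set.Ioo (0 : ℝ) 1 ⊆ Set.Ico 0 1 := Set.Ioo_subset_Ico_self
  obtain ⟨ρ, hρ, hρπ⟩ := exists_arcsinPowSum_eq_pi
  have hρ01 : ρ ∈ Set.Ioo 0 1 := ⟨by linarith [hρ.1], by linarith [hρ.2]⟩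
  have hρ_lt : ρ < 3 / 4 := (strictMonoOn_arcsinPowSum.lt_iff_lt (hIoo hρ01) (by norm_num)).1
    (hρπ.trans_lt pi_lt_arcsinPowSum)
  refine ⟨⟨ρ, ⟨hρ01, hρπ⟩, fun ρ' hρ' hπ => ?_, ?_, by linarith⟩, fun ρ₁ hρ₁ hπ => ?_⟩
  · exact strictMonoOn_arcsinPowSum.injOn (hIoo hρ') (hIoo hρ01) (hπ.trans hρπ.symm)
  · linarith [lt_of_pi_le_arcsinPowSum (hIoo hρ01) hρπ.ge]
  · have hρ₁_gt := lt_of_pi_le_arcsinPowSum (hIoo hρ₁) hπ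
    have hcoeff := div_lt_neg_one_div_logb (p := 5) (q := 12) one_lt_two hρ₁.1 hρ₁.2
      (by norm_num) ((show (2 : ℝ)⁻¹ ^ 5 < 0.74915365 ^ 12 by norm_num).trans_le (by gcongr))
    norm_num at hcoeff
    exact ⟨by linarith, by linarith⟩
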